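/- arXiv:2604.18872 — 5 statements merged into one kernel-verified Lean document; each statement's English description precedes it below -/
import Mathlib

section
/- Diagonal identity in the eigenbasis: suppose P̃ := Π^{1/2}PΠ^{-1/2} = VΛV^⊺ with V real orthogonal, Λ = diag(λ_1, …, λ_N), λ_1 = 1, the first column of V given by V_{i1} = √π_i, and 1 − ½λ_j − ½λ_k ≠ 0 for all (j,k) ≠ (1,1). If an N×N real matrix Ĥ satisfies Ĥ − ½P̃Ĥ − ½ĤP̃ = B and Ĥ_{ii} = π_i h_i for all i, then for every i: π_i h_i = π_i (V^⊺ĤV)_{11} + Σ_{(j,k) ≠ (1,1)} V_{ij} (V^⊺BV)_{jk} V_{ik} / (1 − ½λ_j − ½λ_k). -/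
open Matrix

/-- Diagonal identity in the eigenbasis: if `P̃ = VΛVᵀ` with `V` orthogonal, `λ_1 = 1`,
first column of `V` equal to `√π`, and nonzero divisors away from `(1,1)`, then for any
`Ĥ` with `Ĥ - ½P̃Ĥ - ½ĤP̃ = B` and `Ĥ_{ii} = π_i h_i`, one has for every `i`:
`π_i h_i = π_i (VᵀĤV)_{11} + ∑_{(j,k) ≠ (1,1)} V_{ij} (VᵀBV)_{jk} V_{ik} / (1 - λ_j/2 - λ_k/2)`. -/
theorem diagonal_identity_in_eigenbasis
    (N : ℕ) (hN : 0 < N) (W : Matrix (Fin N) (Fin N) ℝ)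
    (hWsymm : ∀ i j, W i j = W j i)
    (hWnn : ∀ i j, 0 ≤ W i j)
    (w : Fin N → ℝ) (hw : ∀ i, w i = ∑ k, W i k)
    (hwpos : ∀ i, 0 < w i)
    (P : Matrix (Fin N) (Fin N) ℝ) (hP : ∀ i j, P i j = W i j / w i)
    (pv : Fin N → ℝ) (hpv : ∀ i, pv i = w i / ∑ k, w k)
    (Pt : Matrix (Fin N) (Fin N) ℝ)
    (hPt : Pt = Matrix.diagonal (fun i => Real.sqrt (pv i)) * P *
        Matrix.diagonal (fun i => (Real.sqrt (pv i))⁻¹))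
    (V : Matrix (Fin N) (Fin N) ℝ) (hVorth : Vᵀ * V = 1)
    (lam : Fin N → ℝ)
    (hdecomp : Pt = V * Matrix.diagonal lam * Vᵀ)
    (hlam1 : lam ⟨0, hN⟩ = 1)
    (hVcol : ∀ i, V i ⟨0, hN⟩ = Real.sqrt (pv i))
    (hdiv : ∀ j k : Fin N, ¬(j = ⟨0, hN⟩ ∧ k = ⟨0, hN⟩) → 1 - lam j / 2 - lam k / 2 ≠ 0)
    (h : Fin N → ℝ) (B Hhat : Matrix (Fin N) (Fin N) ℝ)
    (hSyl : Hhat - (1 / 2 : ℝ) • (Pt * Hhat) - (1 / 2 : ℝ) • (Hhat * Pt) = B)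
    (hdiag : ∀ i, Hhat i i = pv i * h i) :
    ∀ i, pv i * h i =
        pv i * (Vᵀ * Hhat * V) ⟨0, hN⟩ ⟨0, hN⟩ +
          ∑ p ∈ (Finset.univ : Finset (Fin N × Fin N)).erase
              ((⟨0, hN⟩ : Fin N), (⟨0, hN⟩ : Fin N)),
            V i p.1 * (Vᵀ * B * V) p.1 p.2 * V i p.2 / (1 - lam p.1 / 2 - lam p.2 / 2) := by
  have hVVt : V * Vᵀ = 1 := mul_eq_one_comm.mp hVorth
  set z : Fin N := ⟨0, hN⟩ with hz
  set G : Matrix (Fin N) (Fin N) ℝ := Vᵀ * Hhat * V with hG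
  have hH : Hhat = V * G * Vᵀ := by
    have h1 : V * G * Vᵀ = (V * Vᵀ) * Hhat * (V * Vᵀ) := by
      rw [hG]; noncomm_ring
    rw [h1, hVVt, Matrix.one_mul, Matrix.mul_one]
  have e1 : Vᵀ * ((1/2:ℝ) • (Pt * Hhat)) * V
      = (1/2:ℝ) • (Matrix.diagonal lam * G) := by
    rw [Matrix.mul_smul, Matrix.smul_mul, hdecomp, hG]
    congr 1
    have h1 : Vᵀ * (V * Matrix.diagonal lam * Vᵀ * Hhat) * V
        = (Vᵀ * V) * (Matrix.diagonal lam * (Vᵀ * Hhat * V)) := by noncomm_ring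
    rw [h1, hVorth, Matrix.one_mul]
  have e2 : Vᵀ * ((1/2:ℝ) • (Hhat * Pt)) * V
      = (1/2:ℝ) • (G * Matrix.diagonal lam) := by
    rw [Matrix.mul_smul, Matrix.smul_mul, hdecomp, hG]
    congr 1
    have h1 : Vᵀ * (Hhat * (V * Matrix.diagonal lam * Vᵀ)) * V
        = (Vᵀ * Hhat * V) * Matrix.diagonal lam * (Vᵀ * V) := by noncomm_ring
    rw [h1, hVorth, Matrix.mul_one]
  have hB : Vᵀ * B * V = G - (1/2:ℝ) • (Matrix.diagonal lam * G)
      - (1/2:ℝ) • (G * Matrix.diagonal lam) := by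
    rw [← hSyl, Matrix.mul_sub, Matrix.mul_sub, Matrix.sub_mul, Matrix.sub_mul,
      e1, e2, hG]
  have hBjk : ∀ j k : Fin N, (Vᵀ * B * V) j k = (1 - lam j / 2 - lam k / 2) * G j k := by
    intro j k
    rw [hB]
    simp only [Matrix.sub_apply, Matrix.smul_apply, Matrix.diagonal_mul, Matrix.mul_diagonal,
      smul_eq_mul]
    ring
  have hGjk : ∀ p : Fin N × Fin N, p ≠ (z, z) →
      G p.1 p.2 = (Vᵀ * B * V) p.1 p.2 / (1 - lam p.1 / 2 - lam p.2 / 2) := by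
    intro p hp
    have hd : 1 - lam p.1 / 2 - lam p.2 / 2 ≠ 0 := by
      apply hdiv
      rintro ⟨h1, h2⟩
      exact hp (Prod.ext h1 h2)
    rw [hBjk p.1 p.2, mul_div_cancel_left₀ _ hd]
  intro i
  have hpv0 : 0 ≤ pv i := by
    rw [hpv]
    exact div_nonneg (hwpos i).le (Finset.sum_nonneg fun k _ => (hwpos k).le)
  have hsum : Hhat i i = ∑ p : Fin N × Fin N, V i p.1 * G p.1 p.2 * V i p.2 := by
    conv_lhs => rw [hH]
    rw [Fintype.sum_prod_type, Matrix.mul_apply]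
    simp only [Matrix.mul_apply, Matrix.transpose_apply, Finset.sum_mul]
    rw [Finset.sum_comm]
  have hsplit : (∑ p : Fin N × Fin N, V i p.1 * G p.1 p.2 * V i p.2)
      = V i z * G z z * V i z
        + ∑ p ∈ (Finset.univ : Finset (Fin N × Fin N)).erase (z, z),
            V i p.1 * G p.1 p.2 * V i p.2 :=
    (Finset.add_sum_erase _ (fun p : Fin N × Fin N => V i p.1 * G p.1 p.2 * V i p.2)
      (Finset.mem_univ (z, z))).symm
  have hsq : V i z * G z z * V i z = pv i * G z z := by
    rw [hVcol i]
    have : Real.sqrt (pv i) * G z z * Real.sqrt (pv i)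
        = Real.sqrt (pv i) * Real.sqrt (pv i) * G z z := by ring
    rw [this, Real.mul_self_sqrt hpv0]
  have key : pv i * h i = pv i * G z z
      + ∑ p ∈ (Finset.univ : Finset (Fin N × Fin N)).erase (z, z),
          V i p.1 * G p.1 p.2 * V i p.2 := by
    rw [← hdiag i, hsum, hsplit, hsq]
  rw [key]
  congr 1
  refine Finset.sum_congr rfl fun p hp => ?_
  rw [hGjk p (Finset.ne_of_mem_erase hp)]
  ring
end

section
/- Positive definiteness of the correction matrix: let V be an N×N real orthogonal matrix and let S be an N×N real matrix with S_{kℓ} > 0 for all k, ℓ. Define M_{ij} := Σ_{k,ℓ} V_{ik} V_{jk} S_{kℓ} V_{jℓ} V_{iℓ}. If S is symmetric, then M is a symmetric positive-definite matrix; in particular M has full rank. -/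
/-!
With `A := Vᵀ * diagonal x * V` one has `A k l = ∑ i, x i * V i k * V i l`, so the quadratic form
of `M` is `xᵀ M x = ∑ k l, S k l * (A k l)²`. Each term is nonnegative, and `A ≠ 0` whenever
`x ≠ 0` because `V` is invertible; positivity of the entries of `S` then makes the sum positive.
A positive-definite matrix is invertible, hence of full rank.
-/

open Matrix

theorem Fintype.sum_sum_comm_sum_sum {α β γ δ M : Type*} [Fintype α] [Fintype β] [Fintype γ]
    [Fintype δ] [AddCommMonoid M] (f : α → β → γ → δ → M) :
    ∑ a, ∑ b, ∑ c, ∑ d, f a b c d = ∑ c, ∑ d, ∑ a, ∑ b, f a b c d := by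
  calc ∑ a, ∑ b, ∑ c, ∑ d, f a b c d = ∑ p : α × β, ∑ q : γ × δ, f p.1 p.2 q.1 q.2 := by
        simp only [Fintype.sum_prod_type]
    _ = ∑ q : γ × δ, ∑ p : α × β, f p.1 p.2 q.1 q.2 := Finset.sum_comm
    _ = ∑ c, ∑ d, ∑ a, ∑ b, f a b c d := by simp only [Fintype.sum_prod_type]

variable {n R : Type*} [Fintype n]

def correctionMatrix [CommSemiring R] (V S : Matrix n n R) : Matrix n n R :=
  of fun i j => ∑ k, ∑ l, V i k * V j k * S k l * V j l * V i l

theorem dotProduct_correctionMatrix_mulVec [CommSemiring R] [DecidableEq n]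
    (V S : Matrix n n R) (x : n → R) :
    x ⬝ᵥ correctionMatrix V S *ᵥ x = ∑ k, ∑ l, S k l * (Vᵀ * diagonal x * V) k l ^ 2 := by
  have hA : ∀ k l, (Vᵀ * diagonal x * V) k l = ∑ i, x i * V i k * V i l := fun k l => by
    simp only [mul_apply (M := Vᵀ * diagonal x), mul_diagonal, transpose_apply]
    exact Finset.sum_congr rfl fun i _ => by ring
  simp only [hA, sq, Finset.mul_sum, dotProduct, mulVec, correctionMatrix, of_apply,
    Finset.sum_mul]
  rw [Fintype.sum_sum_comm_sum_sum]
  exact Fintype.sum_congr _ _ fun k => Fintype.sum_congr _ _ fun l =>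
    Fintype.sum_congr _ _ fun i => Fintype.sum_congr _ _ fun j => by ring

theorem isSymm_correctionMatrix [CommSemiring R] (V S : Matrix n n R) :
    (correctionMatrix V S).IsSymm :=
  ext fun i j => Finset.sum_congr rfl fun k _ => Finset.sum_congr rfl fun l _ => by ring

theorem transpose_mul_diagonal_mul_ne_zero [CommSemiring R] [DecidableEq n]
    {V : Matrix n n R} (hV : IsUnit V) {x : n → R} (hx : x ≠ 0) :
    Vᵀ * diagonal x * V ≠ 0 := by
  rwa [Ne, hV.mul_left_eq_zero, ((isUnit_transpose V).mpr hV).mul_right_eq_zero,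
    diagonal_eq_zero]

theorem sum_sum_mul_sq_pos [Ring R] [LinearOrder R] [IsStrictOrderedRing R]
    {S A : Matrix n n R} (hS : ∀ k l, 0 < S k l) (hA : A ≠ 0) :
    0 < ∑ k, ∑ l, S k l * A k l ^ 2 := by
  obtain ⟨k, l, hkl⟩ : ∃ k l, A k l ≠ 0 := by
    by_contra! h
    exact hA (ext h)
  have hnonneg : ∀ k l, 0 ≤ S k l * A k l ^ 2 := fun k l =>
    mul_nonneg (hS k l).le (sq_nonneg _)
  refine Finset.sum_pos' (fun k _ => Finset.sum_nonneg fun l _ => hnonneg k l)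
    ⟨k, Finset.mem_univ k, Finset.sum_pos' (fun l _ => hnonneg k l) ⟨l, Finset.mem_univ l, ?_⟩⟩
  exact mul_pos (hS k l) (sq_pos_of_ne_zero hkl)

theorem posDef_correctionMatrix [DecidableEq n] {V S : Matrix n n ℝ} (hV : IsUnit V)
    (hS : ∀ k l, 0 < S k l) : (correctionMatrix V S).PosDef := by
  refine posDef_iff_dotProduct_mulVec.mpr ⟨isSymm_correctionMatrix V S, fun x hx => ?_⟩
  rw [star_trivial, dotProduct_correctionMatrix_mulVec]
  exact sum_sum_mul_sq_pos hS (transpose_mul_diagonal_mul_ne_zero hV hx)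

theorem correction_matrix_positive_definite_general
    (N : ℕ) (V : Matrix (Fin N) (Fin N) ℝ)
    (hVorth : Vᵀ * V = 1)
    (S : Matrix (Fin N) (Fin N) ℝ)
    (hSpos : ∀ k l, 0 < S k l)
    (M : Matrix (Fin N) (Fin N) ℝ)
    (hM : ∀ i j, M i j = ∑ k, ∑ l, V i k * V j k * S k l * V j l * V i l) :
    (∀ i j, M i j = M j i) ∧ (∀ x : Fin N → ℝ, x ≠ 0 → 0 < x ⬝ᵥ M.mulVec x) ∧
      M.rank = N := by
  obtain rfl : M = correctionMatrix V S := ext hM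
  have hPD := posDef_correctionMatrix (IsUnit.of_mul_eq_one_right Vᵀ hVorth) hSpos
  refine ⟨fun i j => (isSymm_correctionMatrix V S).apply j i, fun x hx => ?_, ?_⟩
  · simpa using hPD.dotProduct_mulVec_pos hx
  · simp [rank_of_isUnit _ hPD.isUnit]

/-- Positive definiteness of the correction matrix: for `V` orthogonal and `S` symmetric
with positive entries, `M_{ij} := ∑_{k,ℓ} V_{ik} V_{jk} S_{kℓ} V_{jℓ} V_{iℓ}` is symmetric
positive-definite; in particular `M` has full rank. -/
theorem correction_matrix_positive_definite
    (N : ℕ) (V : Matrix (Fin N) (Fin N) ℝ)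
    (hVorth : Vᵀ * V = 1)
    (S : Matrix (Fin N) (Fin N) ℝ)
    (hSpos : ∀ k l, 0 < S k l)
    (hSsymm : ∀ k l, S k l = S l k)
    (M : Matrix (Fin N) (Fin N) ℝ)
    (hM : ∀ i j, M i j = ∑ k, ∑ l, V i k * V j k * S k l * V j l * V i l) :
    (∀ i j, M i j = M j i) ∧ (∀ x : Fin N → ℝ, x ≠ 0 → 0 < x ⬝ᵥ M.mulVec x) ∧
      M.rank = N :=
  correction_matrix_positive_definite_general N V hVorth S hSpos M hM
end

section
/- Existence and uniqueness for the Poisson equation of the absorbing lazy pair walk: if W is irreducible, then for every symmetric N×N real matrix F and every h ∈ ℝ^N there exists exactly one N×N real matrix H satisfying the Poisson equation for the absorbing lazy pair walk with source F and prescribed diagonal h. In particular, the system of meeting-time equations τ_{ii} = 0 and τ_{ij} = 1 + ½ Σ_k P_{ik} τ_{kj} + ½ Σ_k P_{jk} τ_{ik} (for i ≠ j) has a unique solution τ. -/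
/-!
The system is linear in `H`, so on the finite-dimensional space of matrices existence and
uniqueness both reduce to injectivity of the operator "diagonal entries, and
`H - ½ P H - ½ H Pᵀ` off the diagonal". Injectivity is a maximum principle: if the homogeneous
problem had a solution with a positive maximum entry `H a b`, the off-diagonal equation (an
average of entries `≤ H a b`) would force `H k b = H a b` whenever `P a k > 0`; irreducibility
carries this along a path from `a` to `b`, ending at the diagonal entry `H b b = 0`. Applying
this to `H` and `-H` gives `H = 0`.
-/

open Matrix

theorem Relation.reflTransGen_of_fin_chain {α : Type*} {r : α → α → Prop} {m : ℕ}
    (c : Fin (m + 1) → α) (hc : ∀ t : Fin m, r (c t.castSucc) (c t.succ)) :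
    Relation.ReflTransGen r (c 0) (c (Fin.last m)) := by
  suffices ∀ t, Relation.ReflTransGen r (c 0) (c t) from this _
  intro t
  induction t using Fin.induction with
  | zero => exact .refl
  | succ t ih => exact ih.tail (hc t)

theorem eq_of_forall_le_of_le_sum_mul {ι : Type*} [Fintype ι] {p f : ι → ℝ} {M : ℝ}
    (hp : ∀ k, 0 ≤ p k) (hsum : ∑ k, p k = 1) (hle : ∀ k, f k ≤ M)
    (hM : M ≤ ∑ k, p k * f k) {k : ι} (hk : 0 < p k) : f k = M := by
  by_contra hne
  have hlt : ∑ k, p k * f k < ∑ k, p k * M :=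
    Finset.sum_lt_sum (fun j _ => mul_le_mul_of_nonneg_left (hle j) (hp j))
      ⟨k, Finset.mem_univ _, mul_lt_mul_of_pos_left (lt_of_le_of_ne (hle k) hne) hk⟩
  rw [← Finset.sum_mul, hsum, one_mul] at hlt
  linarith

section PairPoisson

variable {n : Type*} [Fintype n] [DecidableEq n] (P : Matrix n n ℝ)

noncomputable def pairPoissonOp : Matrix n n ℝ →ₗ[ℝ] Matrix n n ℝ where
  toFun H := Matrix.of fun i j => if i = j then H i i else
    H i j - (1 / 2) * ∑ k, P i k * H k j - (1 / 2) * ∑ k, P j k * H i k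
  map_add' A B := by
    ext i j
    simp only [of_apply, Matrix.add_apply, mul_add, Finset.sum_add_distrib]
    split_ifs <;> ring
  map_smul' r A := by
    ext i j
    simp only [of_apply, Matrix.smul_apply, smul_eq_mul, RingHom.id_apply, mul_left_comm _ r,
      ← Finset.mul_sum]
    split_ifs <;> ring

variable {P}

theorem pairPoissonOp_apply_self (H : Matrix n n ℝ) (i : n) : pairPoissonOp P H i i = H i i := by
  simp [pairPoissonOp]

theorem pairPoissonOp_apply_of_ne (H : Matrix n n ℝ) {i j : n} (hij : i ≠ j) :
    pairPoissonOp P H i j =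
      H i j - (1 / 2) * ∑ k, P i k * H k j - (1 / 2) * ∑ k, P j k * H i k := by
  simp [pairPoissonOp, hij]

theorem pairPoisson_iff_pairPoissonOp_eq (G H : Matrix n n ℝ) (h : n → ℝ) :
    ((∀ i, H i i = h i) ∧ ∀ i j, i ≠ j →
      H i j = G i j + (1 / 2) * ∑ k, P i k * H k j + (1 / 2) * ∑ k, P j k * H i k) ↔
    pairPoissonOp P H = Matrix.of fun i j => if i = j then h i else G i j := by
  constructor
  · rintro ⟨hdiag, hoff⟩
    ext i j
    rcases eq_or_ne i j with rfl | hij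
    · simp [pairPoissonOp_apply_self, hdiag]
    · rw [pairPoissonOp_apply_of_ne H hij, of_apply, if_neg hij, hoff i j hij]
      ring
  · intro hH
    refine ⟨fun i => by simpa [pairPoissonOp_apply_self] using congr_fun₂ hH i i,
      fun i j hij => ?_⟩
    have := congr_fun₂ hH i j
    rw [pairPoissonOp_apply_of_ne H hij, of_apply, if_neg hij] at this
    linarith

theorem le_zero_of_pairPoissonOp_eq_zero (hPnn : ∀ i j, 0 ≤ P i j) (hrow : ∀ i, ∑ k, P i k = 1)
    (hconn : ∀ i j, Relation.ReflTransGen (fun a b => 0 < P a b) i j)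
    {H : Matrix n n ℝ} (hH : pairPoissonOp P H = 0) (i j : n) : H i j ≤ 0 := by
  have hdiag (i : n) : H i i = 0 := by
    simpa [pairPoissonOp_apply_self] using congr_fun₂ hH i i
  have heq {a b : n} (hab : a ≠ b) :
      H a b = (1 / 2) * ∑ k, P a k * H k b + (1 / 2) * ∑ k, P b k * H a k := by
    have := congr_fun₂ hH a b
    rw [pairPoissonOp_apply_of_ne H hab, Matrix.zero_apply] at this
    linarith
  obtain ⟨⟨a, b⟩, -, hmax⟩ :=
    Finset.exists_max_image Finset.univ (fun p : n × n => H p.1 p.2) ⟨(i, j), Finset.mem_univ _⟩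
  set M := H a b
  have hle (c d : n) : H c d ≤ M := hmax (c, d) (Finset.mem_univ _)
  by_contra! hpos
  have hMpos : 0 < M := hpos.trans_le (hle i j)
  have havg_le (c : n) {f : n → ℝ} (hf : ∀ k, f k ≤ M) : ∑ k, P c k * f k ≤ M :=
    calc ∑ k, P c k * f k ≤ ∑ k, P c k * M :=
          Finset.sum_le_sum fun k _ => mul_le_mul_of_nonneg_left (hf k) (hPnn c k)
      _ = M := by rw [← Finset.sum_mul, hrow, one_mul]
  have hspread {x y : n} (hx : H x b = M) (hxy : 0 < P x y) : H y b = M := by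
    have hxb : x ≠ b := by rintro rfl; linarith [hdiag x]
    refine eq_of_forall_le_of_le_sum_mul (hPnn x) (hrow x) (fun k => hle k b) ?_ hxy
    linarith [heq hxb, havg_le b fun k => hle x k]
  have hreach : ∀ x, Relation.ReflTransGen (fun a b => 0 < P a b) a x → H x b = M :=
    fun x hax => hax.rec rfl fun _ hxy hx => hspread hx hxy
  linarith [hreach b (hconn a b), hdiag b]

theorem pairPoissonOp_bijective (hPnn : ∀ i j, 0 ≤ P i j) (hrow : ∀ i, ∑ k, P i k = 1)
    (hconn : ∀ i j, Relation.ReflTransGen (fun a b => 0 < P a b) i j) :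
    Function.Bijective (pairPoissonOp P) := by
  have hinj : Function.Injective (pairPoissonOp P) := by
    rw [← LinearMap.ker_eq_bot, LinearMap.ker_eq_bot']
    intro H hH
    have hneg : pairPoissonOp P (-H) = 0 := by rw [map_neg, hH, neg_zero]
    ext i j
    linarith [le_zero_of_pairPoissonOp_eq_zero hPnn hrow hconn hH i j,
      le_zero_of_pairPoissonOp_eq_zero hPnn hrow hconn hneg i j, Matrix.neg_apply H i j,
      Matrix.zero_apply (α := ℝ) i j]
  exact ⟨hinj, LinearMap.injective_iff_surjective.mp hinj⟩

theorem existsUnique_pairPoisson (hPnn : ∀ i j, 0 ≤ P i j) (hrow : ∀ i, ∑ k, P i k = 1)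
    (hconn : ∀ i j, Relation.ReflTransGen (fun a b => 0 < P a b) i j)
    (G : Matrix n n ℝ) (h : n → ℝ) :
    ∃! H : Matrix n n ℝ, (∀ i, H i i = h i) ∧ ∀ i j, i ≠ j →
      H i j = G i j + (1 / 2) * ∑ k, P i k * H k j + (1 / 2) * ∑ k, P j k * H i k :=
  (existsUnique_congr fun H => pairPoisson_iff_pairPoissonOp_eq G H h).mpr
    ((pairPoissonOp_bijective hPnn hrow hconn).existsUnique _)

end PairPoisson

theorem poisson_exists_unique_general
    (N : ℕ) (W : Matrix (Fin N) (Fin N) ℝ)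
    (hWnn : ∀ i j, 0 ≤ W i j)
    (hWirred : ∀ i j : Fin N, i ≠ j → ∃ (m : ℕ) (c : Fin (m + 1) → Fin N),
      c 0 = i ∧ c (Fin.last m) = j ∧ ∀ t : Fin m, 0 < W (c t.castSucc) (c t.succ))
    (w : Fin N → ℝ) (hw : ∀ i, w i = ∑ k, W i k)
    (hwpos : ∀ i, 0 < w i)
    (P : Matrix (Fin N) (Fin N) ℝ) (hP : ∀ i j, P i j = W i j / w i) :
    (∀ F : Matrix (Fin N) (Fin N) ℝ, (∀ i j, F i j = F j i) → ∀ h : Fin N → ℝ,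
        ∃! H : Matrix (Fin N) (Fin N) ℝ, (∀ i, H i i = h i) ∧ ∀ i j, i ≠ j →
          H i j = F i j + (1 / 2) * ∑ k, P i k * H k j + (1 / 2) * ∑ k, P j k * H i k) ∧
      (∃! τ : Matrix (Fin N) (Fin N) ℝ, (∀ i, τ i i = 0) ∧ ∀ i j, i ≠ j →
        τ i j = 1 + (1 / 2) * ∑ k, P i k * τ k j + (1 / 2) * ∑ k, P j k * τ i k) := by
  have hPnn (i j : Fin N) : 0 ≤ P i j := hP i j ▸ div_nonneg (hWnn i j) (hwpos i).le
  have hrow (i : Fin N) : ∑ k, P i k = 1 := by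
    simp_rw [hP, ← Finset.sum_div, ← hw, div_self (hwpos i).ne']
  have hconn (i j : Fin N) : Relation.ReflTransGen (fun a b => 0 < P a b) i j := by
    rcases eq_or_ne i j with rfl | hij
    · exact .refl
    obtain ⟨m, c, rfl, rfl, hc⟩ := hWirred i j hij
    exact Relation.reflTransGen_of_fin_chain c fun t => hP _ _ ▸ div_pos (hc t) (hwpos _)
  refine ⟨fun F _ h => existsUnique_pairPoisson hPnn hrow hconn F h, ?_⟩
  simpa using existsUnique_pairPoisson hPnn hrow hconn (Matrix.of fun _ _ => 1) 0

/-- Existence and uniqueness for the Poisson equation of the absorbing lazy pair walk: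
if `W` is irreducible, then for every symmetric source `F` and prescribed diagonal `h`
there is exactly one solution `H`; in particular the meeting-time equations have a unique
solution `τ`. -/
theorem poisson_exists_unique
    (N : ℕ) (W : Matrix (Fin N) (Fin N) ℝ)
    (hWsymm : ∀ i j, W i j = W j i)
    (hWnn : ∀ i j, 0 ≤ W i j)
    (hWirred : ∀ i j : Fin N, i ≠ j → ∃ (m : ℕ) (c : Fin (m + 1) → Fin N),
      c 0 = i ∧ c (Fin.last m) = j ∧ ∀ t : Fin m, 0 < W (c t.castSucc) (c t.succ))
    (w : Fin N → ℝ) (hw : ∀ i, w i = ∑ k, W i k)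
    (hwpos : ∀ i, 0 < w i)
    (P : Matrix (Fin N) (Fin N) ℝ) (hP : ∀ i j, P i j = W i j / w i) :
    (∀ F : Matrix (Fin N) (Fin N) ℝ, (∀ i j, F i j = F j i) → ∀ h : Fin N → ℝ,
        ∃! H : Matrix (Fin N) (Fin N) ℝ, (∀ i, H i i = h i) ∧ ∀ i j, i ≠ j →
          H i j = F i j + (1 / 2) * ∑ k, P i k * H k j + (1 / 2) * ∑ k, P j k * H i k) ∧
      (∃! τ : Matrix (Fin N) (Fin N) ℝ, (∀ i, τ i i = 0) ∧ ∀ i j, i ≠ j →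
        τ i j = 1 + (1 / 2) * ∑ k, P i k * τ k j + (1 / 2) * ∑ k, P j k * τ i k) :=
  poisson_exists_unique_general N W hWnn hWirred w hw hwpos P hP
end

section
/- Existence and uniqueness of identity-by-state probabilities: let P be any N×N real row-stochastic matrix (P_{ij} ≥ 0 and Σ_k P_{ik} = 1 for all i) and let u ∈ ℝ with 0 < u ≤ 1. Then there exists exactly one N×N real matrix φ satisfying φ_{ii} = 1 for all i and φ_{ij} = u/2 + ((1−u)/2) Σ_k P_{ik} φ_{kj} + ((1−u)/2) Σ_k P_{jk} φ_{ik} for all i ≠ j. -/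
/-!
The system says exactly that `φ` is a fixed point of the affine map `ibsStep P u`. Each row of
the stochastic matrix `P` averages, so in the sup metric each of the two sums moves by at most
`dist φ ψ`, and the off-diagonal entries of `ibsStep P u` are Lipschitz with constant
`2 · (1 - u) / 2 = 1 - u < 1`. Banach's fixed point theorem then gives existence and uniqueness.
-/

open Matrix Finset Function

theorem ContractingWith.existsUnique_isFixedPt {α : Type*} [MetricSpace α] [CompleteSpace α]
    [Nonempty α] {K : NNReal} {f : α → α} (hf : ContractingWith K f) : ∃! x, IsFixedPt f x :=
  ⟨fixedPoint f hf, hf.fixedPoint_isFixedPt, fun _ hx => hf.fixedPoint_unique hx⟩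

section

variable {ι : Type*} [Fintype ι]

theorem dist_sum_mul_le_of_stochastic {w f g : ι → ℝ} {M : ℝ} (hw : ∀ k, 0 ≤ w k)
    (hw1 : ∑ k, w k = 1) (hfg : ∀ k, dist (f k) (g k) ≤ M) :
    dist (∑ k, w k * f k) (∑ k, w k * g k) ≤ M :=
  calc dist (∑ k, w k * f k) (∑ k, w k * g k)
      ≤ ∑ k, dist (w k * f k) (w k * g k) := dist_sum_sum_le _ _ _
    _ = ∑ k, w k * dist (f k) (g k) := by
        simp only [← smul_eq_mul (a := w _), dist_smul₀, Real.norm_of_nonneg (hw _)]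
    _ ≤ ∑ k, w k * M := by gcongr with k; exacts [hw k, hfg k]
    _ = M := by rw [← sum_mul, hw1, one_mul]

variable [DecidableEq ι]

-- Acts on `ι → ι → ℝ` rather than `Matrix ι ι ℝ` so that the sup metric of the Pi type applies.
noncomputable def ibsStep (P : Matrix ι ι ℝ) (u : ℝ) (φ : ι → ι → ℝ) : ι → ι → ℝ := fun i j =>
  if i = j then 1
  else u / 2 + ((1 - u) / 2) * ∑ k, P i k * φ k j + ((1 - u) / 2) * ∑ k, P j k * φ i k

theorem isFixedPt_ibsStep_iff (P : Matrix ι ι ℝ) (u : ℝ) (φ : ι → ι → ℝ) :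
    IsFixedPt (ibsStep P u) φ ↔ (∀ i, φ i i = 1) ∧ ∀ i j, i ≠ j →
      φ i j = u / 2 + ((1 - u) / 2) * ∑ k, P i k * φ k j
        + ((1 - u) / 2) * ∑ k, P j k * φ i k := by
  simp only [IsFixedPt, funext_iff, ibsStep]
  constructor
  · intro h
    exact ⟨fun i => by simpa using (h i i).symm, fun i j hij => by simpa [hij] using (h i j).symm⟩
  · rintro ⟨hdiag, hoff⟩ i j
    split_ifs with hij
    · rw [hij, hdiag]
    · exact (hoff i j hij).symm

theorem lipschitzWith_ibsStep {P : Matrix ι ι ℝ} (hPnn : ∀ i j, 0 ≤ P i j)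
    (hProw : ∀ i, ∑ k, P i k = 1) {u : ℝ} (hu1 : u ≤ 1) :
    LipschitzWith (1 - u).toNNReal (ibsStep P u) := by
  refine LipschitzWith.of_dist_le_mul fun φ ψ => ?_
  rw [Real.coe_toNNReal _ (by linarith)]
  have hD : 0 ≤ (1 - u) * dist φ ψ := mul_nonneg (by linarith) dist_nonneg
  have hentry : ∀ a b, dist (φ a b) (ψ a b) ≤ dist φ ψ := fun a b =>
    (dist_le_pi_dist (φ a) (ψ a) b).trans (dist_le_pi_dist φ ψ a)
  have hterm : ∀ {w f g : ι → ℝ}, (∀ k, 0 ≤ w k) → ∑ k, w k = 1 →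
      (∀ k, dist (f k) (g k) ≤ dist φ ψ) →
      dist ((1 - u) / 2 * ∑ k, w k * f k) ((1 - u) / 2 * ∑ k, w k * g k)
        ≤ (1 - u) / 2 * dist φ ψ := fun hw hw1 hfg => by
    rw [← smul_eq_mul, ← smul_eq_mul, dist_smul₀, Real.norm_of_nonneg (by linarith)]
    gcongr
    exact dist_sum_mul_le_of_stochastic hw hw1 hfg
  refine (dist_pi_le_iff hD).2 fun i => (dist_pi_le_iff hD).2 fun j => ?_
  by_cases hij : i = j
  · simpa [ibsStep, hij] using hD
  simp only [ibsStep, if_neg hij]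
  calc _ ≤ (1 - u) / 2 * dist φ ψ + (1 - u) / 2 * dist φ ψ := by
        refine (dist_add_add_le _ _ _ _).trans (add_le_add ?_ ?_)
        · rw [dist_add_left]
          exact hterm (hPnn i) (hProw i) fun k => hentry k j
        · exact hterm (hPnn j) (hProw j) fun k => hentry i k
    _ = (1 - u) * dist φ ψ := by ring

theorem contractingWith_ibsStep {P : Matrix ι ι ℝ} (hPnn : ∀ i j, 0 ≤ P i j)
    (hProw : ∀ i, ∑ k, P i k = 1) {u : ℝ} (hu0 : 0 < u) (hu1 : u ≤ 1) :
    ContractingWith (1 - u).toNNReal (ibsStep P u) :=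
  ⟨Real.toNNReal_lt_one.2 (by linarith), lipschitzWith_ibsStep hPnn hProw hu1⟩

end

/-- Existence and uniqueness of identity-by-state probabilities: for any row-stochastic
`P` and mutation rate `0 < u ≤ 1`, there is exactly one matrix `φ` with `φ_{ii} = 1` and
`φ_{ij} = u/2 + ((1-u)/2) ∑_k P_{ik} φ_{kj} + ((1-u)/2) ∑_k P_{jk} φ_{ik}` for `i ≠ j`. -/
theorem identity_by_state_exists_unique
    (N : ℕ) (P : Matrix (Fin N) (Fin N) ℝ)
    (hPnn : ∀ i j, 0 ≤ P i j)
    (hProw : ∀ i, ∑ k, P i k = 1)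
    (u : ℝ) (hu0 : 0 < u) (hu1 : u ≤ 1) :
    ∃! φ : Matrix (Fin N) (Fin N) ℝ, (∀ i, φ i i = 1) ∧ ∀ i j, i ≠ j →
      φ i j = u / 2 + ((1 - u) / 2) * ∑ k, P i k * φ k j
        + ((1 - u) / 2) * ∑ k, P j k * φ i k := by
  have h := (contractingWith_ibsStep hPnn hProw hu0 hu1).existsUnique_isFixedPt
  simp only [isFixedPt_ibsStep_iff] at h
  exact h
end

section
/- Correctness of the diagonal-correction algorithm: suppose W is irreducible and write P̃ := Π^{1/2}PΠ^{-1/2} = VΛV^⊺ with V real orthogonal, Λ = diag(λ_1, …, λ_N), λ_1 = 1, and V_{i1} = √π_i for all i. Define S by S_{11} = 1 and S_{jk} = 1/(1 − ½λ_j − ½λ_k) for (j,k) ≠ (1,1). Given a symmetric N×N real matrix F and h ∈ ℝ^N, set F̂^V := V^⊺Π^{1/2}FΠ^{1/2}V, f_i := Σ_{j,k} V_{ij} F̂^V_{jk} S_{jk} V_{ik}, and M_{ij} := Σ_{k,ℓ} V_{ik} V_{jk} S_{kℓ} V_{jℓ} V_{iℓ}. Suppose (η, d) ∈ ℝ ×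 ℝ^N satisfies the bordered linear system Σ_i π_i (π_i d_i) = −F̂^V_{11} and η π_i + Σ_j M_{ij} (π_j d_j) = π_i h_i − f_i for all i. Define D̂^V := V^⊺ Π diag(d) V and the matrix Ĥ^V by Ĥ^V_{11} = η and Ĥ^V_{jk} = (F̂^V_{jk} + D̂^V_{jk}) / (1 − ½λ_j − ½λ_k) for (j,k) ≠ (1,1). Then H := Π^{-1/2} V Ĥ^V V^⊺ Π^{-1/2} satisfies the Poisson equation for the absorbing lazy pair walk with source F and prescribed diagonal h. -/
/-!
Conjugating by `Π^{1/2}` and then by `V` turns the lazy pair operator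
`X ↦ X - ½ (P X + X Pᵀ)` into entrywise multiplication by `1 - λⱼ/2 - λₖ/2`. This factor
vanishes only at `(1, 1)`: every eigenvalue of the stochastic matrix `P` has modulus at most `1`,
and by the maximum principle an eigenvector for `1` of the irreducible `P` is constant, hence not
orthogonal to `√π`. So `Ĥ^V` is exactly the matrix for which the operator sends `H` to
`F + diag d`, which is the Poisson equation off the diagonal; the first bordered equation makes
the `(1, 1)` entry consistent (`F̂^V₁₁ + D̂^V₁₁ = 0`), and the remaining ones are `H_ii = h_i`
once `(V Ĥ^V Vᵀ)_ii` is expanded through `S`.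
-/

open Matrix

namespace Matrix

variable {ι : Type*}

def IsChainConnected (A : Matrix ι ι ℝ) : Prop :=
  ∀ i j, i ≠ j → ∃ (m : ℕ) (c : Fin (m + 1) → ι),
    c 0 = i ∧ c (Fin.last m) = j ∧ ∀ t : Fin m, 0 < A (c t.castSucc) (c t.succ)

theorem IsChainConnected.mono {A B : Matrix ι ι ℝ} (hA : A.IsChainConnected)
    (hAB : ∀ i j, 0 < A i j → 0 < B i j) : B.IsChainConnected := fun i j hij => by
  obtain ⟨m, c, hc0, hcm, hc⟩ := hA i j hij
  exact ⟨m, c, hc0, hcm, fun t => hAB _ _ (hc t)⟩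

theorem IsChainConnected.forall_of_step {A : Matrix ι ι ℝ} (hA : A.IsChainConnected)
    {Q : ι → Prop} (hQ : ∀ i j, 0 < A i j → Q i → Q j) {i : ι} (hi : Q i) (j : ι) : Q j := by
  obtain rfl | hij := eq_or_ne i j
  · exact hi
  obtain ⟨m, c, rfl, rfl, hc⟩ := hA i j hij
  exact Fin.induction hi (fun t ht => hQ _ _ (hc t) ht) (Fin.last m)

variable [Fintype ι]

theorem transpose_mul_self_apply (V : Matrix ι ι ℝ) (j k : ι) :
    (Vᵀ * V) j k = ∑ i, V i j * V i k := by
  simp [mul_apply]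

theorem mul_mul_transpose_apply_self (V X : Matrix ι ι ℝ) (i : ι) :
    (V * X * Vᵀ) i i = ∑ j, ∑ k, V i j * X j k * V i k := by
  simp only [mul_apply, transpose_apply, Finset.sum_mul]
  exact Finset.sum_comm

noncomputable def lazyPairGenerator (P X : Matrix ι ι ℝ) : Matrix ι ι ℝ :=
  X - (2⁻¹ : ℝ) • (P * X + X * Pᵀ)

theorem lazyPairGenerator_apply (P X : Matrix ι ι ℝ) (i j : ι) :
    lazyPairGenerator P X i j = X i j - 2⁻¹ * (∑ k, P i k * X k j + ∑ k, P j k * X i k) := by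
  simp [lazyPairGenerator, mul_apply, mul_comm, mul_add]

variable [DecidableEq ι]

theorem transpose_mul_diagonal_mul_apply (V : Matrix ι ι ℝ) (g : ι → ℝ) (j k : ι) :
    (Vᵀ * diagonal g * V) j k = ∑ i, V i j * g i * V i k := by
  rw [mul_apply]
  simp only [mul_diagonal, transpose_apply]

theorem div_rowSum_mem_rowStochastic {W P : Matrix ι ι ℝ} (hW : ∀ i j, 0 ≤ W i j)
    (hpos : ∀ i, 0 < ∑ k, W i k) (hP : ∀ i j, P i j = W i j / ∑ k, W i k) :
    P ∈ rowStochastic ℝ ι := by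
  refine mem_rowStochastic_iff_sum.2 ⟨fun i j => ?_, fun i => ?_⟩
  · rw [hP]
    exact div_nonneg (hW i j) (hpos i).le
  · simp_rw [hP, ← Finset.sum_div]
    exact div_self (hpos i).ne'

variable {P : Matrix ι ι ℝ}

theorem abs_le_one_of_mulVec_eq_smul (hP : P ∈ rowStochastic ℝ ι) {u : ι → ℝ} (hu : u ≠ 0)
    {μ : ℝ} (h : P *ᵥ u = μ • u) : |μ| ≤ 1 := by
  obtain ⟨j, hj⟩ := Function.ne_iff.1 hu
  have : Nonempty ι := ⟨j⟩
  obtain ⟨i, hi⟩ := Finite.exists_max fun k => |u k|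
  have hui : 0 < |u i| := (abs_pos.2 hj).trans_le (hi j)
  have : |μ| * |u i| ≤ 1 * |u i| :=
    calc |μ| * |u i| = |∑ k, P i k * u k| := by
          rw [← abs_mul, ← smul_eq_mul, ← Pi.smul_apply, ← h]; rfl
      _ ≤ ∑ k, P i k * |u i| := by
          refine (Finset.abs_sum_le_sum_abs _ _).trans (Finset.sum_le_sum fun k _ => ?_)
          rw [abs_mul, abs_of_nonneg (nonneg_of_mem_rowStochastic hP)]
          exact mul_le_mul_of_nonneg_left (hi k) (nonneg_of_mem_rowStochastic hP)
      _ = 1 * |u i| := by rw [← Finset.sum_mul, sum_row_of_mem_rowStochastic hP]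
  exact le_of_mul_le_mul_right this hui

theorem apply_eq_of_mulVec_eq_self (hP : P ∈ rowStochastic ℝ ι) (hirr : P.IsChainConnected)
    {u : ι → ℝ} (h : P *ᵥ u = u) (i j : ι) : u i = u j := by
  have : Nonempty ι := ⟨i⟩
  obtain ⟨i₀, hi₀⟩ := Finite.exists_max u
  -- At a maximum the average `∑ₗ P a l (u i₀ - u l) = 0` has nonnegative terms, so each vanishes.
  have hstep : ∀ a b, 0 < P a b → u a = u i₀ → u b = u i₀ := by
    intro a b hab ha
    have hsum : ∑ l, P a l * (u i₀ - u l) = 0 := by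
      simp only [mul_sub, Finset.sum_sub_distrib, ← Finset.sum_mul,
        sum_row_of_mem_rowStochastic hP, one_mul]
      rw [← ha, ← congrFun h a]
      exact sub_self _
    have := (Finset.sum_eq_zero_iff_of_nonneg fun l _ => mul_nonneg
      (nonneg_of_mem_rowStochastic hP) (sub_nonneg.2 (hi₀ l))).1 hsum b (Finset.mem_univ b)
    linarith [(mul_eq_zero.1 this).resolve_left hab.ne']
  have hconst := hirr.forall_of_step hstep rfl
  rw [hconst i, hconst j]

theorem lt_one_of_mulVec_eq_smul (hP : P ∈ rowStochastic ℝ ι) (hirr : P.IsChainConnected)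
    {π : ι → ℝ} (hπ : ∀ i, 0 < π i) {u : ι → ℝ} (hu : u ≠ 0) (horth : ∑ i, π i * u i = 0)
    {μ : ℝ} (h : P *ᵥ u = μ • u) : μ < 1 := by
  refine (le_of_abs_le (abs_le_one_of_mulVec_eq_smul hP hu h)).lt_of_ne fun hμ => hu ?_
  obtain ⟨j, -⟩ := Function.ne_iff.1 hu
  have hconst : ∀ i, u i = u j :=
    fun i => apply_eq_of_mulVec_eq_self hP hirr (by rw [h, hμ, one_smul]) i j
  have hsum : u j * ∑ i, π i = 0 := by
    rw [Finset.mul_sum, ← horth]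
    exact Finset.sum_congr rfl fun i _ => by rw [hconst i, mul_comm]
  have hπsum : 0 < ∑ i, π i := Finset.sum_pos (fun i _ => hπ i) ⟨j, Finset.mem_univ j⟩
  funext i
  rw [hconst i, Pi.zero_apply]
  exact (mul_eq_zero.1 hsum).resolve_right hπsum.ne'

theorem mulVec_col_eq_smul {A U : Matrix ι ι ℝ} {lam : ι → ℝ} (h : A * U = U * diagonal lam)
    (m : ι) : A *ᵥ (fun i => U i m) = lam m • fun i => U i m := by
  funext i
  have := congrFun (congrFun h i) m
  rw [mul_diagonal, mul_apply] at this
  simpa [mulVec, dotProduct, mul_comm] using this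

theorem mul_diagonal_inv_mul_eq_mul_diagonal {s : ι → ℝ} (hs : ∀ i, s i ≠ 0)
    {Pt V : Matrix ι ι ℝ} {lam : ι → ℝ} (hDP : diagonal s * P = Pt * diagonal s)
    (hV : Vᵀ * V = 1) (hdecomp : Pt = V * diagonal lam * Vᵀ) :
    P * (diagonal (fun i => (s i)⁻¹) * V) = diagonal (fun i => (s i)⁻¹) * V * diagonal lam := by
  set Dinv := diagonal fun i => (s i)⁻¹
  have hinv_s : Dinv * diagonal s = 1 := by
    rw [diagonal_mul_diagonal, ← diagonal_one]
    exact congrArg diagonal (funext fun i => inv_mul_cancel₀ (hs i))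
  have hs_inv : diagonal s * Dinv = 1 := mul_eq_one_comm.1 hinv_s
  calc P * (Dinv * V) = Dinv * (diagonal s * P) * Dinv * V := by
        rw [← mul_assoc Dinv, hinv_s, one_mul, mul_assoc]
    _ = Dinv * Pt * (diagonal s * Dinv) * V := by rw [hDP]; simp only [mul_assoc]
    _ = Dinv * V * diagonal lam * (Vᵀ * V) := by
        rw [hs_inv, mul_one, hdecomp]; simp only [mul_assoc]
    _ = Dinv * V * diagonal lam := by rw [hV, mul_one]

theorem one_sub_half_add_half_pos (hP : P ∈ rowStochastic ℝ ι) (hirr : P.IsChainConnected)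
    {s : ι → ℝ} (hs : ∀ i, 0 < s i) {Pt V : Matrix ι ι ℝ} {lam : ι → ℝ}
    (hDP : diagonal s * P = Pt * diagonal s) (hV : Vᵀ * V = 1)
    (hdecomp : Pt = V * diagonal lam * Vᵀ) {o : ι} (hVo : ∀ i, V i o = s i) :
    ∀ j k, ¬(j = o ∧ k = o) → 0 < 1 - lam j / 2 - lam k / 2 := by
  set Dinv := diagonal fun i => (s i)⁻¹
  have hU := mul_diagonal_inv_mul_eq_mul_diagonal (fun i => (hs i).ne') hDP hV hdecomp
  have hcol_ne : ∀ m, (fun i => (Dinv * V) i m) ≠ 0 := by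
    intro m hm
    have hVm : ∀ i, V i m = 0 := fun i => by
      simpa [Dinv, (hs i).ne'] using congrFun hm i
    have := transpose_mul_self_apply V m m
    simp [hV, hVm] at this
  have hle : ∀ m, lam m ≤ 1 := fun m =>
    le_of_abs_le (abs_le_one_of_mulVec_eq_smul hP (hcol_ne m) (mulVec_col_eq_smul hU m))
  have hlt : ∀ m, m ≠ o → lam m < 1 := by
    intro m hm
    refine lt_one_of_mulVec_eq_smul hP hirr (fun i => mul_pos (hs i) (hs i)) (hcol_ne m) ?_
      (mulVec_col_eq_smul hU m)
    have := transpose_mul_self_apply V o m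
    rw [hV, one_apply_ne (Ne.symm hm)] at this
    rw [this]
    refine Finset.sum_congr rfl fun i _ => ?_
    simp only [Dinv, diagonal_mul, hVo]
    field_simp
  intro j k hjk
  by_cases hj : j = o
  · linarith [hle j, hlt k fun hk => hjk ⟨hj, hk⟩]
  · linarith [hlt j hj, hle k]

theorem diagonal_mul_lazyPairGenerator_mul_diagonal {Pt : Matrix ι ι ℝ} {s : ι → ℝ}
    (h : diagonal s * P = Pt * diagonal s) (X : Matrix ι ι ℝ) :
    diagonal s * lazyPairGenerator P X * diagonal s
      = lazyPairGenerator Pt (diagonal s * X * diagonal s) := by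
  have hT : Pᵀ * diagonal s = diagonal s * Ptᵀ := by
    simpa [transpose_mul] using congrArg transpose h
  have hleft : diagonal s * (P * X) * diagonal s = Pt * (diagonal s * X * diagonal s) := by
    rw [← mul_assoc, h]; simp only [mul_assoc]
  have hright : diagonal s * (X * Pᵀ) * diagonal s = diagonal s * X * diagonal s * Ptᵀ := by
    rw [mul_assoc, mul_assoc X, hT]; simp only [mul_assoc]
  simp only [lazyPairGenerator, Matrix.mul_sub, Matrix.sub_mul, Matrix.mul_smul,
    Matrix.smul_mul, Matrix.mul_add, Matrix.add_mul, hleft, hright]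

theorem lazyPairGenerator_conj_orthogonal {V : Matrix ι ι ℝ} (hV : Vᵀ * V = 1) (lam : ι → ℝ)
    (X : Matrix ι ι ℝ) :
    lazyPairGenerator (V * diagonal lam * Vᵀ) (V * X * Vᵀ)
      = V * of (fun j k => (1 - lam j / 2 - lam k / 2) * X j k) * Vᵀ := by
  have hmul : ∀ A B : Matrix ι ι ℝ, V * A * Vᵀ * (V * B * Vᵀ) = V * (A * B) * Vᵀ := by
    intro A B
    simp only [mul_assoc]
    rw [← mul_assoc Vᵀ V, hV, one_mul]
  have hentries : of (fun j k => (1 - lam j / 2 - lam k / 2) * X j k)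
      = X - (2⁻¹ : ℝ) • (diagonal lam * X + X * diagonal lam) := by
    ext j k
    simp only [of_apply, sub_apply, add_apply, smul_apply, smul_eq_mul, diagonal_mul,
      mul_diagonal]
    ring
  have hsymm : (V * diagonal lam * Vᵀ)ᵀ = V * diagonal lam * Vᵀ := by
    simp [transpose_mul, mul_assoc]
  rw [lazyPairGenerator, hsymm, hmul, hmul, hentries]
  simp only [Matrix.mul_sub, Matrix.sub_mul, Matrix.mul_smul, Matrix.smul_mul, Matrix.mul_add,
    Matrix.add_mul]

theorem diagonal_mul_eq_mul_diagonal_of_eq_inv {s : ι → ℝ} (hs : ∀ i, s i ≠ 0)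
    {Pt : Matrix ι ι ℝ} (h : Pt = diagonal s * P * diagonal (fun i => (s i)⁻¹)) :
    diagonal s * P = Pt * diagonal s := by
  rw [h, mul_assoc, diagonal_mul_diagonal]
  simp [inv_mul_cancel₀ (hs _)]

theorem diagonal_mul_mul_diagonal_of_eq_inv {s : ι → ℝ} (hs : ∀ i, s i ≠ 0)
    {X Y : Matrix ι ι ℝ}
    (h : X = diagonal (fun i => (s i)⁻¹) * Y * diagonal (fun i => (s i)⁻¹)) :
    diagonal s * X * diagonal s = Y := by
  ext i j
  simp only [h, diagonal_mul, mul_diagonal]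
  field_simp [hs i, hs j]

theorem lazyPairGenerator_apply_of_ne {Pt V H HV F FV DV : Matrix ι ι ℝ} {s lam g : ι → ℝ}
    (hs : ∀ i, s i ≠ 0) (hDP : diagonal s * P = Pt * diagonal s) (hV : Vᵀ * V = 1)
    (hdecomp : Pt = V * diagonal lam * Vᵀ) (hH : diagonal s * H * diagonal s = V * HV * Vᵀ)
    (hFV : FV = Vᵀ * (diagonal s * F * diagonal s) * V) (hDV : DV = Vᵀ * diagonal g * V)
    (hHV : ∀ j k, (1 - lam j / 2 - lam k / 2) * HV j k = FV j k + DV j k)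
    {i j : ι} (hij : i ≠ j) : lazyPairGenerator P H i j = F i j := by
  have hVV : V * Vᵀ = 1 := mul_eq_one_comm.1 hV
  have hconj : ∀ A : Matrix ι ι ℝ, V * (Vᵀ * A * V) * Vᵀ = A := fun A => by
    simp only [← mul_assoc, hVV, one_mul]; rw [mul_assoc, hVV, mul_one]
  have hHV' : of (fun j k => (1 - lam j / 2 - lam k / 2) * HV j k) = FV + DV := by
    ext j k; exact hHV j k
  have key : diagonal s * lazyPairGenerator P H * diagonal s
      = diagonal s * F * diagonal s + diagonal g := by
    rw [diagonal_mul_lazyPairGenerator_mul_diagonal hDP, hH, hdecomp,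
      lazyPairGenerator_conj_orthogonal hV, hHV', hFV, hDV, Matrix.mul_add, Matrix.add_mul,
      hconj, hconj]
  have := congrFun (congrFun key i) j
  simp only [diagonal_mul, mul_diagonal, add_apply, diagonal_apply_ne _ hij, add_zero] at this
  exact mul_left_cancel₀ (hs i) (mul_right_cancel₀ (hs j) this)

end Matrix

theorem eq_mul_add_ite_of_bordered {ι : Type*} [DecidableEq ι] {S E HV : Matrix ι ι ℝ}
    {lam : ι → ℝ} {o : ι} {η : ℝ} (hE : E o o = 0) (hS11 : S o o = 1)
    (hS : ∀ j k, ¬(j = o ∧ k = o) → S j k = 1 / (1 - lam j / 2 - lam k / 2))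
    (hHV1 : HV o o = η)
    (hHV2 : ∀ j k, ¬(j = o ∧ k = o) → HV j k = E j k / (1 - lam j / 2 - lam k / 2))
    (j k : ι) : HV j k = S j k * E j k + if j = o ∧ k = o then η else 0 := by
  split_ifs with hjk
  · obtain ⟨rfl, rfl⟩ := hjk
    rw [hHV1, hS11, hE, mul_zero, zero_add]
  · rw [hHV2 j k hjk, hS j k hjk, add_zero, one_div_mul_eq_div]

theorem mul_eq_of_bordered {ι : Type*} {E HV : Matrix ι ι ℝ} {lam : ι → ℝ} {o : ι}
    (hlam : lam o = 1) (hE : E o o = 0)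
    (hden : ∀ j k, ¬(j = o ∧ k = o) → 0 < 1 - lam j / 2 - lam k / 2)
    (hHV2 : ∀ j k, ¬(j = o ∧ k = o) → HV j k = E j k / (1 - lam j / 2 - lam k / 2))
    (j k : ι) : (1 - lam j / 2 - lam k / 2) * HV j k = E j k := by
  by_cases hjk : j = o ∧ k = o
  · obtain ⟨rfl, rfl⟩ := hjk
    rw [hlam, hE]; ring
  · rw [hHV2 j k hjk, mul_div_cancel₀ _ (hden j k hjk).ne']

theorem mul_mul_transpose_apply_self_of_bordered {ι : Type*} [Fintype ι] [DecidableEq ι]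
    {V S FV DV HV : Matrix ι ι ℝ} {g : ι → ℝ}
    {o : ι} {η : ℝ} (hDV : DV = Vᵀ * diagonal g * V)
    (hHV : ∀ j k, HV j k = S j k * (FV j k + DV j k) + if j = o ∧ k = o then η else 0) (i : ι) :
    (V * HV * Vᵀ) i i = ∑ j, ∑ k, V i j * FV j k * S j k * V i k
      + ∑ l, (∑ j, ∑ k, V i j * V l j * S j k * V l k * V i k) * g l + η * (V i o * V i o) := by
  have hsplit : ∀ j k, V i j * HV j k * V i k = V i j * FV j k * S j k * V i k
      + ∑ l, V i j * V l j * S j k * V l k * V i k * g l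
      + if j = o ∧ k = o then η * (V i o * V i o) else 0 := fun j k => by
    have hmid : ∑ l, V i j * V l j * S j k * V l k * V i k * g l
        = V i j * S j k * (∑ l, V l j * g l * V l k) * V i k := by
      rw [Finset.mul_sum, Finset.sum_mul]
      exact Finset.sum_congr rfl fun l _ => by ring
    rw [hHV, hDV, transpose_mul_diagonal_mul_apply, hmid]
    split_ifs with h
    · obtain ⟨rfl, rfl⟩ := h
      ring
    · ring
  rw [mul_mul_transpose_apply_self]
  have hmid : ∑ j, ∑ k, ∑ l, V i j * V l j * S j k * V l k * V i k * g l
      = ∑ l, (∑ j, ∑ k, V i j * V l j * S j k * V l k * V i k) * g l := by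
    simp only [Finset.sum_mul]
    exact (Finset.sum_congr rfl fun j _ => Finset.sum_comm).trans Finset.sum_comm
  simp only [hsplit, Finset.sum_add_distrib, hmid]
  simp [ite_and]

theorem diagonal_correction_algorithm_correct_general
    (N : ℕ) (hN : 0 < N) (W : Matrix (Fin N) (Fin N) ℝ)
    (hWnn : ∀ i j, 0 ≤ W i j)
    (hWirred : ∀ i j : Fin N, i ≠ j → ∃ (m : ℕ) (c : Fin (m + 1) → Fin N),
      c 0 = i ∧ c (Fin.last m) = j ∧ ∀ t : Fin m, 0 < W (c t.castSucc) (c t.succ))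
    (w : Fin N → ℝ) (hw : ∀ i, w i = ∑ k, W i k)
    (hwpos : ∀ i, 0 < w i)
    (P : Matrix (Fin N) (Fin N) ℝ) (hP : ∀ i j, P i j = W i j / w i)
    (pv : Fin N → ℝ) (hpv : ∀ i, pv i = w i / ∑ k, w k)
    (Pt : Matrix (Fin N) (Fin N) ℝ)
    (hPt : Pt = Matrix.diagonal (fun i => Real.sqrt (pv i)) * P *
        Matrix.diagonal (fun i => (Real.sqrt (pv i))⁻¹))
    (V : Matrix (Fin N) (Fin N) ℝ) (hVorth : Vᵀ * V = 1)
    (lam : Fin N → ℝ)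
    (hdecomp : Pt = V * Matrix.diagonal lam * Vᵀ)
    (hlam1 : lam ⟨0, hN⟩ = 1)
    (hVcol : ∀ i, V i ⟨0, hN⟩ = Real.sqrt (pv i))
    (S : Matrix (Fin N) (Fin N) ℝ)
    (hS11 : S ⟨0, hN⟩ ⟨0, hN⟩ = 1)
    (hS : ∀ j k : Fin N, ¬(j = ⟨0, hN⟩ ∧ k = ⟨0, hN⟩) →
      S j k = 1 / (1 - lam j / 2 - lam k / 2))
    (F : Matrix (Fin N) (Fin N) ℝ)
    (h : Fin N → ℝ)
    (FV : Matrix (Fin N) (Fin N) ℝ)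
    (hFV : FV = Vᵀ * (Matrix.diagonal (fun i => Real.sqrt (pv i)) * F *
        Matrix.diagonal (fun i => Real.sqrt (pv i))) * V)
    (f : Fin N → ℝ)
    (hf : ∀ i, f i = ∑ j, ∑ k, V i j * FV j k * S j k * V i k)
    (M : Matrix (Fin N) (Fin N) ℝ)
    (hM : ∀ i j, M i j = ∑ k, ∑ l, V i k * V j k * S k l * V j l * V i l)
    (η : ℝ) (d : Fin N → ℝ)
    (hsys1 : ∑ i, pv i * (pv i * d i) = -FV ⟨0, hN⟩ ⟨0, hN⟩)
    (hsys2 : ∀ i, η * pv i + ∑ j, M i j * (pv j * d j) = pv i * h i - f i)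
    (DV : Matrix (Fin N) (Fin N) ℝ)
    (hDV : DV = Vᵀ * Matrix.diagonal (fun i => pv i * d i) * V)
    (HV : Matrix (Fin N) (Fin N) ℝ)
    (hHV1 : HV ⟨0, hN⟩ ⟨0, hN⟩ = η)
    (hHV2 : ∀ j k : Fin N, ¬(j = ⟨0, hN⟩ ∧ k = ⟨0, hN⟩) →
      HV j k = (FV j k + DV j k) / (1 - lam j / 2 - lam k / 2))
    (H : Matrix (Fin N) (Fin N) ℝ)
    (hH : H = Matrix.diagonal (fun i => (Real.sqrt (pv i))⁻¹) * V * HV * Vᵀ *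
        Matrix.diagonal (fun i => (Real.sqrt (pv i))⁻¹)) :
    (∀ i, H i i = h i) ∧ ∀ i j, i ≠ j →
      H i j = F i j + (1 / 2) * ∑ k, P i k * H k j + (1 / 2) * ∑ k, P j k * H i k := by
  set o : Fin N := ⟨0, hN⟩
  set s : Fin N → ℝ := fun i => Real.sqrt (pv i)
  have hpv_pos : ∀ i, 0 < pv i := fun i => by
    rw [hpv]
    exact div_pos (hwpos i) (Finset.sum_pos (fun k _ => hwpos k) ⟨i, Finset.mem_univ i⟩)
  have hs_pos : ∀ i, 0 < s i := fun i => Real.sqrt_pos.2 (hpv_pos i)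
  have hss : ∀ i, s i * s i = pv i := fun i => Real.mul_self_sqrt (hpv_pos i).le
  have hPstoch : P ∈ rowStochastic ℝ (Fin N) :=
    div_rowSum_mem_rowStochastic hWnn (fun i => hw i ▸ hwpos i) fun i j => hw i ▸ hP i j
  have hPirr : P.IsChainConnected := IsChainConnected.mono hWirred fun i j hij => by
    rw [hP]; exact div_pos hij (hwpos i)
  have hDP := diagonal_mul_eq_mul_diagonal_of_eq_inv (fun i => (hs_pos i).ne') hPt
  have hden := one_sub_half_add_half_pos hPstoch hPirr hs_pos hDP hVorth hdecomp hVcol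
  have hE : (FV + DV) o o = 0 := by
    rw [Matrix.add_apply, hDV, transpose_mul_diagonal_mul_apply, ← neg_eq_iff_add_eq_zero, ← hsys1]
    exact Finset.sum_congr rfl fun l _ => by rw [hVcol]; linear_combination -(pv l * d l) * hss l
  have hH' : diagonal s * H * diagonal s = V * HV * Vᵀ := by
    refine diagonal_mul_mul_diagonal_of_eq_inv (fun i => (hs_pos i).ne') ?_
    rw [hH]; simp only [mul_assoc]; rfl
  constructor
  · intro i
    have hdiag := mul_mul_transpose_apply_self_of_bordered hDV
      (eq_mul_add_ite_of_bordered hE hS11 hS hHV1 hHV2) i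
    simp only [← hf, ← hM, hVcol] at hdiag
    have hHii := congrFun (congrFun hH' i) i
    simp only [diagonal_mul, mul_diagonal, hdiag] at hHii
    refine mul_left_cancel₀ (hpv_pos i).ne' ?_
    linear_combination hHii + hsys2 i - (H i i - η) * hss i
  · intro i j hij
    have := lazyPairGenerator_apply_of_ne (fun i => (hs_pos i).ne') hDP hVorth hdecomp hH' hFV hDV
      (mul_eq_of_bordered hlam1 hE hden hHV2) hij
    rw [lazyPairGenerator_apply] at this
    linarith

/-- Correctness of the diagonal-correction algorithm: the matrix `H` built by
Algorithm 1 (eigendecomposition of `P̃`, Cauchy matrix `S`, correction data `f, M`,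
bordered system for `(η, d)`, and back-substitution) satisfies the Poisson equation
for the absorbing lazy pair walk with source `F` and prescribed diagonal `h`. -/
theorem diagonal_correction_algorithm_correct
    (N : ℕ) (hN : 0 < N) (W : Matrix (Fin N) (Fin N) ℝ)
    (hWsymm : ∀ i j, W i j = W j i)
    (hWnn : ∀ i j, 0 ≤ W i j)
    (hWirred : ∀ i j : Fin N, i ≠ j → ∃ (m : ℕ) (c : Fin (m + 1) → Fin N),
      c 0 = i ∧ c (Fin.last m) = j ∧ ∀ t : Fin m, 0 < W (c t.castSucc) (c t.succ))
    (w : Fin N → ℝ) (hw : ∀ i, w i = ∑ k, W i k)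
    (hwpos : ∀ i, 0 < w i)
    (P : Matrix (Fin N) (Fin N) ℝ) (hP : ∀ i j, P i j = W i j / w i)
    (pv : Fin N → ℝ) (hpv : ∀ i, pv i = w i / ∑ k, w k)
    (Pt : Matrix (Fin N) (Fin N) ℝ)
    (hPt : Pt = Matrix.diagonal (fun i => Real.sqrt (pv i)) * P *
        Matrix.diagonal (fun i => (Real.sqrt (pv i))⁻¹))
    (V : Matrix (Fin N) (Fin N) ℝ) (hVorth : Vᵀ * V = 1)
    (lam : Fin N → ℝ)
    (hdecomp : Pt = V * Matrix.diagonal lam * Vᵀ)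
    (hlam1 : lam ⟨0, hN⟩ = 1)
    (hVcol : ∀ i, V i ⟨0, hN⟩ = Real.sqrt (pv i))
    (S : Matrix (Fin N) (Fin N) ℝ)
    (hS11 : S ⟨0, hN⟩ ⟨0, hN⟩ = 1)
    (hS : ∀ j k : Fin N, ¬(j = ⟨0, hN⟩ ∧ k = ⟨0, hN⟩) →
      S j k = 1 / (1 - lam j / 2 - lam k / 2))
    (F : Matrix (Fin N) (Fin N) ℝ) (hF : ∀ i j, F i j = F j i)
    (h : Fin N → ℝ)
    (FV : Matrix (Fin N) (Fin N) ℝ)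
    (hFV : FV = Vᵀ * (Matrix.diagonal (fun i => Real.sqrt (pv i)) * F *
        Matrix.diagonal (fun i => Real.sqrt (pv i))) * V)
    (f : Fin N → ℝ)
    (hf : ∀ i, f i = ∑ j, ∑ k, V i j * FV j k * S j k * V i k)
    (M : Matrix (Fin N) (Fin N) ℝ)
    (hM : ∀ i j, M i j = ∑ k, ∑ l, V i k * V j k * S k l * V j l * V i l)
    (η : ℝ) (d : Fin N → ℝ)
    (hsys1 : ∑ i, pv i * (pv i * d i) = -FV ⟨0, hN⟩ ⟨0, hN⟩)
    (hsys2 : ∀ i, η * pv i + ∑ j, M i j * (pv j * d j) = pv i * h i - f i)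
    (DV : Matrix (Fin N) (Fin N) ℝ)
    (hDV : DV = Vᵀ * Matrix.diagonal (fun i => pv i * d i) * V)
    (HV : Matrix (Fin N) (Fin N) ℝ)
    (hHV1 : HV ⟨0, hN⟩ ⟨0, hN⟩ = η)
    (hHV2 : ∀ j k : Fin N, ¬(j = ⟨0, hN⟩ ∧ k = ⟨0, hN⟩) →
      HV j k = (FV j k + DV j k) / (1 - lam j / 2 - lam k / 2))
    (H : Matrix (Fin N) (Fin N) ℝ)
    (hH : H = Matrix.diagonal (fun i => (Real.sqrt (pv i))⁻¹) * V * HV * Vᵀ *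
        Matrix.diagonal (fun i => (Real.sqrt (pv i))⁻¹)) :
    (∀ i, H i i = h i) ∧ ∀ i j, i ≠ j →
      H i j = F i j + (1 / 2) * ∑ k, P i k * H k j + (1 / 2) * ∑ k, P j k * H i k :=
  diagonal_correction_algorithm_correct_general N hN W hWnn hWirred w hw hwpos P hP pv hpv Pt hPt V
    hVorth lam hdecomp hlam1 hVcol S hS11 hS F h FV hFV f hf M hM η d hsys1 hsys2 DV hDV HV hHV1
    hHV2 H hH
end
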